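/- Let p : Fin m → ℕ be positive processing times and let τ be a schedule that orders the jobs in nondecreasing processing time (i.e., τ(i) < τ(j) implies p(i) ≤ p(j)). Then for every schedule τ', ∑_i C_i(τ) ≤ ∑_i C_i(τ'). Consequently, for any profile (σ₁,…,σ_n) of preferred schedules, such a schedule τ minimizes the total lateness ∑_{a=1}^{n} L(τ, σ_a) over all schedules. -/

import Mathlib

/-!
Job `j` is counted in the completion time of every job scheduled at or after it, so the sum of
completion times under `τ` is `∑ j, (m - τ j) * p j`: a scalar product of the processing times with
position weights that decrease along the schedule. By the rearrangement inequality this is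
smallest when the longest jobs get the smallest weights, i.e. when `τ` runs the jobs from shortest
to longest. The lateness of `τ'` against `σ` is `∑ C(τ') - ∑ C(σ)`, so the same `τ` also minimizes
the total lateness against any profile.
-/

/-- Completion time of job `i` in schedule `τ` with processing times `p`. -/
def completionTime {m : ℕ} (p : Fin m → ℕ) (τ : Equiv.Perm (Fin m)) (i : Fin m) : ℕ :=
  ∑ j ∈ Finset.univ.filter (fun j => τ j ≤ τ i), p j

open Finset

theorem Equiv.Perm.card_filter_apply_le_apply {m : ℕ} (τ : Equiv.Perm (Fin m)) (j : Fin m) :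
    #{i | τ j ≤ τ i} = m - τ j := by
  rw [← Fin.card_Ici, ← filter_le_eq_Ici]
  exact card_equiv τ (by simp)

theorem sum_completionTime_eq_sum_mul {m : ℕ} (p : Fin m → ℕ) (τ : Equiv.Perm (Fin m)) :
    ∑ i, completionTime p τ i = ∑ j, (m - τ j) * p j := by
  simp only [completionTime, sum_filter]
  rw [sum_comm]
  refine sum_congr rfl fun j _ => ?_
  rw [← sum_filter, sum_const, smul_eq_mul, τ.card_filter_apply_le_apply]

theorem sum_completionTime_le_of_monovary {m : ℕ} {p : Fin m → ℕ} {τ : Equiv.Perm (Fin m)}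
    (hτ : Monovary p τ) (τ' : Equiv.Perm (Fin m)) :
    ∑ i, completionTime p τ i ≤ ∑ i, completionTime p τ' i := by
  have hanti : Antivary (fun j => m - (τ j : ℕ)) p := fun i j hp =>
    Nat.sub_le_sub_left (not_lt.mp fun h => (hτ h).not_gt hp) m
  rw [sum_completionTime_eq_sum_mul, sum_completionTime_eq_sum_mul]
  simpa using hanti.sum_mul_le_sum_comp_perm_mul (σ := τ'.trans τ.symm)

theorem spt_minimizes_total_lateness_general (m : ℕ) (p : Fin m → ℕ)
    (τ : Equiv.Perm (Fin m)) (hτ : ∀ i j : Fin m, τ i < τ j → p i ≤ p j) :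
    (∀ τ' : Equiv.Perm (Fin m),
      ∑ i : Fin m, completionTime p τ i ≤ ∑ i : Fin m, completionTime p τ' i) ∧
    (∀ (n : ℕ) (σs : Fin n → Equiv.Perm (Fin m)) (τ' : Equiv.Perm (Fin m)),
      ∑ a : Fin n, ∑ i : Fin m,
          ((completionTime p τ i : ℤ) - (completionTime p (σs a) i : ℤ))
        ≤ ∑ a : Fin n, ∑ i : Fin m,
            ((completionTime p τ' i : ℤ) - (completionTime p (σs a) i : ℤ))) := by
  refine ⟨sum_completionTime_le_of_monovary hτ, fun n σs τ' => sum_le_sum fun a _ => ?_⟩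
  rw [sum_sub_distrib, sum_sub_distrib]
  exact sub_le_sub_right (mod_cast sum_completionTime_le_of_monovary hτ τ') _

/-- A schedule ordering the jobs in nondecreasing processing time minimizes the sum
of completion times, and consequently minimizes the total lateness
`∑_a L(τ,σ_a) = ∑_a ∑_i (C_i(τ) − C_i(σ_a))` for every profile of preferred
schedules: the Σ-L rule schedules the jobs from shortest to longest. -/
theorem spt_minimizes_total_lateness (m : ℕ) (p : Fin m → ℕ) (hp : ∀ i, 0 < p i)
    (τ : Equiv.Perm (Fin m)) (hτ : ∀ i j : Fin m, τ i < τ j → p i ≤ p j) :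
    (∀ τ' : Equiv.Perm (Fin m),
      ∑ i : Fin m, completionTime p τ i ≤ ∑ i : Fin m, completionTime p τ' i) ∧
    (∀ (n : ℕ) (σs : Fin n → Equiv.Perm (Fin m)) (τ' : Equiv.Perm (Fin m)),
      ∑ a : Fin n, ∑ i : Fin m,
          ((completionTime p τ i : ℤ) - (completionTime p (σs a) i : ℤ))
        ≤ ∑ a : Fin n, ∑ i : Fin m,
            ((completionTime p τ' i : ℤ) - (completionTime p (σs a) i : ℤ))) :=
  spt_minimizes_total_lateness_general m p τ hτ
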